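/- arXiv:2304.06050 — 8 statements merged into one kernel-verified Lean document; each statement's English description precedes it below -/
import Mathlib

section
/- Let n ≥ 1 and let A be an n×n complex matrix. Then the numerical range of A satisfies W(A) = ⋂_{θ ∈ [0,2π)} { μ ∈ ℂ : Re(e^{iθ} μ) ≤ λ₁(Re(e^{iθ}A)) }. Consequently, for any n×n complex matrix B, W(B) ⊆ W(A) if and only if λ₁(Re(e^{iθ}B)) ≤ λ₁(Re(e^{iθ}A)) for all θ ∈ [0,2π). -/
open Matrix BigOperators

/-- The cyclic shift matrix `S(a₁, …, aₙ)`. -/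
noncomputable def cyc {n : ℕ} (a : Fin n → ℂ) : Matrix (Fin n) (Fin n) ℂ :=
  Matrix.of fun i j => if (j : ℕ) = ((i : ℕ) + 1) % n then a i else 0

/-- The numerical range `W(A) = { x* A x : x*x = 1 }`. -/
def numRange {n : ℕ} (A : Matrix (Fin n) (Fin n) ℂ) : Set ℂ :=
  {z | ∃ x : Fin n → ℂ, star x ⬝ᵥ x = 1 ∧ z = star x ⬝ᵥ A.mulVec x}

/-- `Re(e^{iθ} A) = (e^{iθ}A + e^{-iθ}A*)/2`. -/
noncomputable def reT {n : ℕ} (θ : ℝ) (A : Matrix (Fin n) (Fin n) ℂ) :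
    Matrix (Fin n) (Fin n) ℂ :=
  ((1 : ℂ)/2) • (Complex.exp (θ * Complex.I) • A + Complex.exp (-(θ * Complex.I)) • Aᴴ)

/-- The largest (real) eigenvalue of a matrix. -/
noncomputable def maxEig {n : ℕ} (H : Matrix (Fin n) (Fin n) ℂ) : ℝ :=
  sSup {t : ℝ | ∃ v : Fin n → ℂ, v ≠ 0 ∧ H.mulVec v = (t : ℂ) • v}

/-!
The quadratic form of `Re(e^{iθ}A)` is `x ↦ Re(e^{iθ} x*Ax)`, so `λ₁(Re(e^{iθ}A))` is the
maximum of `Re(e^{iθ}z)` over `z ∈ W(A)`: it is the support function of `W(A)`. The numerical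
range is compact and, by the Toeplitz–Hausdorff theorem, convex, so by Hahn–Banach in `ℂ ≅ ℝ²` it
is the intersection of its supporting half-planes; comparing support functions decides inclusion.

For Toeplitz–Hausdorff, the affine change `A ↦ (A - p)/(q - p)` reduces convexity to showing that
`0, 1 ∈ W(A)` implies `[0, 1] ⊆ W(A)`. Take unit vectors `x, y` with `x*Ax = 0`, `y*Ay = 1` and
rotate the phase of `x` until `x*Ay + y*Ax` is real. Then `z*Az` is real for every
`z = (1-t)x + ty`, `z ≠ 0`, and the intermediate value theorem applied to `z*Az / z*z` on `[0, 1]`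
gives every point.
-/

open scoped ComplexOrder

section QuadraticForm

variable {ι : Type*} [Fintype ι]

lemma star_dotProduct_self_eq_norm_sq (x : ι → ℂ) :
    star x ⬝ᵥ x = ((‖WithLp.toLp 2 x‖ ^ 2 : ℝ) : ℂ) := by
  rw [dotProduct_comm, ← EuclideanSpace.inner_toLp_toLp, inner_self_eq_norm_sq_to_K]
  push_cast
  rfl

lemma isCompact_setOf_star_dotProduct_self_eq_one :
    IsCompact {x : ι → ℂ | star x ⬝ᵥ x = 1} := by
  have hsphere : {x : ι → ℂ | star x ⬝ᵥ x = 1} =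
      WithLp.ofLp '' Metric.sphere (0 : EuclideanSpace ℂ ι) 1 := by
    ext x
    simp only [Set.mem_ofPred_eq, Set.mem_image, mem_sphere_zero_iff_norm,
      star_dotProduct_self_eq_norm_sq]
    constructor
    · intro hx
      refine ⟨WithLp.toLp 2 x, ?_, rfl⟩
      have : ‖WithLp.toLp 2 x‖ ^ 2 = 1 := by exact_mod_cast hx
      exact (pow_eq_one_iff_of_nonneg (norm_nonneg _) two_ne_zero).mp this
    · rintro ⟨y, hy, rfl⟩
      simp [hy]
  rw [hsphere]
  exact (isCompact_sphere _ _).image (PiLp.continuous_ofLp 2 _)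

lemma continuous_star_dotProduct_mulVec (M : Matrix ι ι ℂ) :
    Continuous fun x : ι → ℂ => star x ⬝ᵥ (M *ᵥ x) :=
  continuous_star.dotProduct (continuous_const.matrix_mulVec continuous_id)

lemma star_smul_dotProduct_mulVec_smul (M : Matrix ι ι ℂ) (c : ℂ) (x : ι → ℂ) :
    star (c • x) ⬝ᵥ (M *ᵥ (c • x)) = star c * c * (star x ⬝ᵥ (M *ᵥ x)) := by
  rw [star_smul, mulVec_smul, smul_dotProduct, dotProduct_smul, smul_eq_mul, smul_eq_mul,
    mul_assoc]

lemma star_dotProduct_mulVec_real_smul_add (M : Matrix ι ι ℂ) (a b : ℝ) (x y : ι → ℂ) :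
    star ((a : ℂ) • x + (b : ℂ) • y) ⬝ᵥ (M *ᵥ ((a : ℂ) • x + (b : ℂ) • y)) =
      a ^ 2 * (star x ⬝ᵥ (M *ᵥ x)) + b ^ 2 * (star y ⬝ᵥ (M *ᵥ y)) +
        a * b * (star x ⬝ᵥ (M *ᵥ y) + star y ⬝ᵥ (M *ᵥ x)) := by
  simp only [star_add, star_smul, mulVec_add, mulVec_smul, add_dotProduct, dotProduct_add,
    smul_dotProduct, dotProduct_smul, smul_eq_mul, Complex.star_def, Complex.conj_ofReal]
  ring

lemma star_dotProduct_conjTranspose_mulVec (M : Matrix ι ι ℂ) (x : ι → ℂ) :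
    star x ⬝ᵥ (Mᴴ *ᵥ x) = star (star x ⬝ᵥ (M *ᵥ x)) := by
  rw [← star_dotProduct, star_mulVec, ← dotProduct_mulVec]

lemma real_smul_add_real_smul_ne_zero (M : Matrix ι ι ℂ) {x y : ι → ℂ} (hx : x ≠ 0)
    (hx0 : star x ⬝ᵥ (M *ᵥ x) = 0) (hy : star y ⬝ᵥ (M *ᵥ y) ≠ 0) {a b : ℝ}
    (hab : a + b = 1) :
    (a : ℂ) • x + (b : ℂ) • y ≠ 0 := by
  intro hxy
  obtain rfl | hb := eq_or_ne b 0
  · rw [add_zero] at hab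
    simp_all
  · have hyx : y = (-(a : ℂ) / b) • x := by
      rw [← inv_smul_smul₀ (Complex.ofReal_ne_zero.mpr hb) y, eq_neg_of_add_eq_zero_right hxy,
        smul_neg, smul_smul, ← neg_smul, neg_div, div_eq_inv_mul]
    rw [hyx, star_smul_dotProduct_mulVec_smul, hx0, mul_zero] at hy
    exact hy rfl

end QuadraticForm

namespace Matrix.IsHermitian

variable {ι : Type*} [Fintype ι] [DecidableEq ι] {H : Matrix ι ι ℂ}

lemma posSemidef_smul_one_sub (hH : H.IsHermitian) {M : ℝ} (hM : ∀ i, hH.eigenvalues i ≤ M) :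
    ((M : ℂ) • 1 - H).PosSemidef := by
  have hdiag : (M : ℂ) • (1 : Matrix ι ι ℂ) - diagonal (RCLike.ofReal ∘ hH.eigenvalues) =
      diagonal fun i => ((M - hH.eigenvalues i : ℝ) : ℂ) := by
    rw [smul_one_eq_diagonal, diagonal_sub]
    simp
  have hconj : (M : ℂ) • 1 - H = Unitary.conjStarAlgAut ℂ _ hH.eigenvectorUnitary
      (diagonal fun i => ((M - hH.eigenvalues i : ℝ) : ℂ)) := by
    conv_lhs => rw [hH.spectral_theorem]
    rw [← hdiag, map_sub, map_smul, map_one]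
  rw [hconj]
  simp [Unitary.conjStarAlgAut_apply, Unitary.isUnit_coe.posSemidef_star_right_conjugate_iff,
    posSemidef_diagonal_iff, hM]

lemma re_star_dotProduct_mulVec_le (hH : H.IsHermitian) {M : ℝ}
    (hM : ∀ i, hH.eigenvalues i ≤ M) (x : ι → ℂ) :
    (star x ⬝ᵥ (H *ᵥ x)).re ≤ M * (star x ⬝ᵥ x).re := by
  have h := (hH.posSemidef_smul_one_sub hM).re_dotProduct_nonneg x
  simp only [sub_mulVec, smul_mulVec, one_mulVec, dotProduct_sub, dotProduct_smul, smul_eq_mul,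
    RCLike.re_to_complex, Complex.sub_re, Complex.re_ofReal_mul] at h
  linarith

lemma star_eigenvectorBasis_dotProduct_self (hH : H.IsHermitian) (i : ι) :
    star ⇑(hH.eigenvectorBasis i) ⬝ᵥ ⇑(hH.eigenvectorBasis i) = 1 := by
  rw [star_dotProduct_self_eq_norm_sq, WithLp.toLp_ofLp, hH.eigenvectorBasis.orthonormal.1 i]
  simp

lemma mulVec_eigenvectorBasis' (hH : H.IsHermitian) (i : ι) :
    H *ᵥ ⇑(hH.eigenvectorBasis i) =
      (hH.eigenvalues i : ℂ) • ⇑(hH.eigenvectorBasis i) := by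
  rw [hH.mulVec_eigenvectorBasis]
  ext j
  simp [Complex.real_smul]

end Matrix.IsHermitian

namespace Matrix.IsHermitian

variable {n : ℕ} {H : Matrix (Fin n) (Fin n) ℂ}

lemma maxEig_eq_eigenvalues (hH : H.IsHermitian) {i₀ : Fin n}
    (hi₀ : ∀ i, hH.eigenvalues i ≤ hH.eigenvalues i₀) : maxEig H = hH.eigenvalues i₀ := by
  refine IsGreatest.csSup_eq ⟨⟨_, ?_, hH.mulVec_eigenvectorBasis' i₀⟩, ?_⟩
  · exact (WithLp.ofLp_eq_zero 2).ne.2 (hH.eigenvectorBasis.orthonormal.ne_zero i₀)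
  · rintro t ⟨v, hv, hHv⟩
    have hpos : 0 < (star v ⬝ᵥ v).re :=
      (Complex.pos_iff.mp (dotProduct_star_self_pos_iff.mpr hv)).1
    have h := hH.re_star_dotProduct_mulVec_le hi₀ v
    rw [hHv, dotProduct_smul, smul_eq_mul, Complex.re_ofReal_mul] at h
    exact le_of_mul_le_mul_right h hpos

variable [NeZero n]

lemma re_star_dotProduct_mulVec_le_maxEig (hH : H.IsHermitian) (x : Fin n → ℂ) :
    (star x ⬝ᵥ (H *ᵥ x)).re ≤ maxEig H * (star x ⬝ᵥ x).re := by
  obtain ⟨i₀, hi₀⟩ := Finite.exists_max hH.eigenvalues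
  rw [hH.maxEig_eq_eigenvalues hi₀]
  exact hH.re_star_dotProduct_mulVec_le hi₀ x

lemma exists_star_dotProduct_mulVec_eq_maxEig (hH : H.IsHermitian) :
    ∃ x : Fin n → ℂ, star x ⬝ᵥ x = 1 ∧ star x ⬝ᵥ (H *ᵥ x) = maxEig H := by
  obtain ⟨i₀, hi₀⟩ := Finite.exists_max hH.eigenvalues
  refine ⟨_, hH.star_eigenvectorBasis_dotProduct_self i₀, ?_⟩
  rw [hH.mulVec_eigenvectorBasis', dotProduct_smul, hH.star_eigenvectorBasis_dotProduct_self,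
    hH.maxEig_eq_eigenvalues hi₀, smul_eq_mul, mul_one]

end Matrix.IsHermitian

lemma Complex.star_exp_ofReal_mul_I (θ : ℝ) :
    star (Complex.exp (θ * Complex.I)) = Complex.exp (-(θ * Complex.I)) := by
  rw [Complex.star_def, ← Complex.exp_conj]
  simp

lemma Complex.exists_star_mul_self_eq_one_im_eq_zero (u w : ℂ) :
    ∃ e : ℂ, star e * e = 1 ∧ (star e * u + e * w).im = 0 := by
  set v := w - star u
  set e := Complex.exp ((-v.arg : ℝ) * Complex.I)
  have hev : e * v = ‖v‖ := by
    conv_lhs => rw [← Complex.norm_mul_exp_arg_mul_I v]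
    rw [mul_left_comm, ← Complex.exp_add, Complex.ofReal_neg, neg_mul, neg_add_cancel,
      Complex.exp_zero, mul_one]
  refine ⟨e, ?_, ?_⟩
  · rw [Complex.star_def, Complex.conj_mul', Complex.norm_exp_ofReal_mul_I, Complex.ofReal_one,
      one_pow]
  · have him : (star e * u + e * w).im = (e * v).im := by
      simp only [v, Complex.star_def, Complex.add_im, Complex.mul_im, Complex.conj_re,
        Complex.conj_im, Complex.sub_re, Complex.sub_im]
      ring
    rw [him, hev, Complex.ofReal_im]

lemma Complex.exists_mem_Ico_exp_mul_I_eq (θ : ℝ) :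
    ∃ φ ∈ Set.Ico 0 (2 * Real.pi),
      Complex.exp (φ * Complex.I) = Complex.exp (θ * Complex.I) := by
  refine ⟨toIcoMod Real.two_pi_pos 0 θ,
    by simpa using toIcoMod_mem_Ico Real.two_pi_pos 0 θ, ?_⟩
  rw [toIcoMod, Complex.ofReal_sub, Complex.ofReal_zsmul, Complex.ofReal_mul, Complex.ofReal_ofNat]
  exact Complex.exp_mul_I_periodic.sub_zsmul_eq _

lemma Convex.exists_mem_Ico_re_exp_mul_lt {s : Set ℂ} (hs : Convex ℝ s) (hsc : IsClosed s)
    {μ : ℂ} (hμ : μ ∉ s) : ∃ θ ∈ Set.Ico 0 (2 * Real.pi), ∀ z ∈ s,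
      (Complex.exp (θ * Complex.I) * z).re < (Complex.exp (θ * Complex.I) * μ).re := by
  obtain ⟨f, u, hfs, hfμ⟩ := geometric_hahn_banach_closed_point hs hsc hμ
  set w := starRingEnd ℂ ((InnerProductSpace.toDual ℝ ℂ).symm f)
  obtain ⟨θ, hθ, hθw⟩ := Complex.exists_mem_Ico_exp_mul_I_eq w.arg
  have hf : ∀ z, f z = ‖w‖ * (Complex.exp (θ * Complex.I) * z).re := fun z => by
    rw [← InnerProductSpace.toDual_symm_apply (x := z), Complex.inner, hθw,
      ← Complex.re_ofReal_mul, ← mul_assoc, Complex.norm_mul_exp_arg_mul_I, mul_comm]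
  refine ⟨θ, hθ, fun z hz => lt_of_mul_lt_mul_left ?_ (norm_nonneg w)⟩
  rw [← hf, ← hf]
  exact (hfs z hz).trans hfμ

section NumRange

variable {n : ℕ} (A : Matrix (Fin n) (Fin n) ℂ)

lemma reT_isHermitian (θ : ℝ) : (reT θ A).IsHermitian := by
  simp only [IsHermitian, reT, conjTranspose_smul, conjTranspose_add, conjTranspose_conjTranspose,
    Complex.star_exp_ofReal_mul_I, star_div₀, star_one, star_ofNat]
  rw [← Complex.star_exp_ofReal_mul_I, star_star, add_comm]

lemma star_dotProduct_reT_mulVec (θ : ℝ) (x : Fin n → ℂ) :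
    star x ⬝ᵥ (reT θ A *ᵥ x) =
      ((Complex.exp (θ * Complex.I) * (star x ⬝ᵥ (A *ᵥ x))).re : ℂ) := by
  rw [reT, smul_mulVec, add_mulVec, smul_mulVec, smul_mulVec, dotProduct_smul, dotProduct_add,
    dotProduct_smul, dotProduct_smul, star_dotProduct_conjTranspose_mulVec,
    ← Complex.star_exp_ofReal_mul_I, smul_eq_mul,
    smul_eq_mul, smul_eq_mul, ← star_mul', Complex.star_def, Complex.add_conj]
  push_cast
  ring

lemma isGreatest_maxEig_reT [NeZero n] (θ : ℝ) :
    IsGreatest ((fun z => (Complex.exp (θ * Complex.I) * z).re) '' numRange A)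
      (maxEig (reT θ A)) := by
  constructor
  · obtain ⟨x, hx, hxA⟩ := (reT_isHermitian A θ).exists_star_dotProduct_mulVec_eq_maxEig
    rw [star_dotProduct_reT_mulVec] at hxA
    exact ⟨_, ⟨x, hx, rfl⟩, by exact_mod_cast hxA⟩
  · rintro _ ⟨_, ⟨x, hx, rfl⟩, rfl⟩
    have h := (reT_isHermitian A θ).re_star_dotProduct_mulVec_le_maxEig x
    rwa [star_dotProduct_reT_mulVec, hx, Complex.ofReal_re, Complex.one_re, mul_one] at h

lemma isCompact_numRange : IsCompact (numRange A) := by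
  have h : numRange A = (fun x => star x ⬝ᵥ (A *ᵥ x)) '' {x | star x ⬝ᵥ x = 1} := by
    ext z
    simp [numRange, eq_comm]
  rw [h]
  exact isCompact_setOf_star_dotProduct_self_eq_one.image (continuous_star_dotProduct_mulVec A)

lemma div_mem_numRange {x : Fin n → ℂ} (hx : x ≠ 0) :
    star x ⬝ᵥ (A *ᵥ x) / (star x ⬝ᵥ x) ∈ numRange A := by
  set r : ℝ := ‖WithLp.toLp 2 x‖
  have hr : r ≠ 0 := norm_ne_zero_iff.mpr ((WithLp.toLp_eq_zero 2).ne.2 hx)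
  have hxx : star x ⬝ᵥ x = (r : ℂ) ^ 2 := by
    rw [star_dotProduct_self_eq_norm_sq]
    push_cast
    rfl
  have hstar : star ((r : ℂ)⁻¹) * (r : ℂ)⁻¹ = ((r : ℂ) ^ 2)⁻¹ := by
    rw [star_inv₀, Complex.star_def, Complex.conj_ofReal]
    ring
  refine ⟨(r : ℂ)⁻¹ • x, ?_, ?_⟩
  · have h := star_smul_dotProduct_mulVec_smul 1 (r : ℂ)⁻¹ x
    simp only [one_mulVec] at h
    rw [h, hstar, hxx, inv_mul_cancel₀ (by exact_mod_cast pow_ne_zero 2 hr)]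
  · rw [star_smul_dotProduct_mulVec_smul, hstar, hxx, div_eq_inv_mul]

lemma star_dotProduct_smul_add_smul_one_mulVec (α β : ℂ) {x : Fin n → ℂ}
    (hx : star x ⬝ᵥ x = 1) :
    star x ⬝ᵥ ((α • A + β • 1) *ᵥ x) = α * (star x ⬝ᵥ (A *ᵥ x)) + β := by
  rw [add_mulVec, smul_mulVec, smul_mulVec, one_mulVec, dotProduct_add, dotProduct_smul,
    dotProduct_smul, hx, smul_eq_mul, smul_eq_mul, mul_one]

lemma ofReal_mem_numRange_of_im_eq_zero {x y : Fin n → ℂ}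
    (hx : star x ⬝ᵥ x = 1) (hy : star y ⬝ᵥ y = 1)
    (hx0 : star x ⬝ᵥ (A *ᵥ x) = 0) (hy1 : star y ⬝ᵥ (A *ᵥ y) = 1)
    (hxy : (star x ⬝ᵥ (A *ᵥ y) + star y ⬝ᵥ (A *ᵥ x)).im = 0)
    {s : ℝ} (hs : s ∈ Set.Icc 0 1) :
    (s : ℂ) ∈ numRange A := by
  set z : ℝ → Fin n → ℂ := fun t => ((1 - t : ℝ) : ℂ) • x + (t : ℂ) • y
  have hx_ne : x ≠ 0 := by
    rintro rfl
    simp at hx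
  have hz_ne : ∀ t, z t ≠ 0 := fun t =>
    real_smul_add_real_smul_ne_zero A hx_ne hx0 (by simp [hy1]) (sub_add_cancel 1 t)
  have hz_im : ∀ t, (star (z t) ⬝ᵥ (A *ᵥ z t)).im = 0 := by
    intro t
    simp only [z, star_dotProduct_mulVec_real_smul_add, hx0, hy1, Complex.add_im, Complex.mul_im,
      hxy]
    simp [← Complex.ofReal_pow]
  have hzz_pos : ∀ t, 0 < (star (z t) ⬝ᵥ z t).re := fun t =>
    (Complex.pos_iff.mp (dotProduct_star_self_pos_iff.mpr (hz_ne t))).1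
  have hzz_im : ∀ t, (star (z t) ⬝ᵥ z t).im = 0 := fun t => by
    rw [star_dotProduct_self_eq_norm_sq, Complex.ofReal_im]
  set g : ℝ → ℝ := fun t => (star (z t) ⬝ᵥ (A *ᵥ z t)).re / (star (z t) ⬝ᵥ z t).re
  have hz_cont : Continuous z := by fun_prop
  have hzAz_cont : Continuous fun t => (star (z t) ⬝ᵥ (A *ᵥ z t)).re :=
    Complex.continuous_re.comp ((continuous_star_dotProduct_mulVec A).comp hz_cont)
  have hzz_cont : Continuous fun t => (star (z t) ⬝ᵥ z t).re :=
    Complex.continuous_re.comp (hz_cont.star.dotProduct hz_cont)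
  have hg : ContinuousOn g (Set.Icc 0 1) :=
    hzAz_cont.continuousOn.div hzz_cont.continuousOn fun t _ => (hzz_pos t).ne'
  have hg0 : g 0 = 0 := by simp [g, z, hx0]
  have hg1 : g 1 = 1 := by simp [g, z, hy, hy1]
  obtain ⟨t, -, hgt⟩ := intermediate_value_Icc zero_le_one hg (by rwa [hg0, hg1])
  have hst : (s : ℂ) = star (z t) ⬝ᵥ (A *ᵥ z t) / (star (z t) ⬝ᵥ z t) := by
    rw [← hgt, Complex.ofReal_div]
    congr 1 <;> apply Complex.ext <;> simp [hz_im t, hzz_im t]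
  rw [hst]
  exact div_mem_numRange A (hz_ne t)

lemma ofReal_mem_numRange_of_zero_mem_of_one_mem (h0 : 0 ∈ numRange A) (h1 : 1 ∈ numRange A)
    {s : ℝ} (hs : s ∈ Set.Icc 0 1) : (s : ℂ) ∈ numRange A := by
  obtain ⟨x, hx, hx0⟩ := h0
  obtain ⟨y, hy, hy1⟩ := h1
  obtain ⟨e, he, hxy⟩ := Complex.exists_star_mul_self_eq_one_im_eq_zero
    (star x ⬝ᵥ (A *ᵥ y)) (star y ⬝ᵥ (A *ᵥ x))
  refine ofReal_mem_numRange_of_im_eq_zero A (x := e • x) ?_ hy ?_ hy1.symm ?_ hs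
  · have h := star_smul_dotProduct_mulVec_smul 1 e x
    rwa [one_mulVec, one_mulVec, he, hx, mul_one] at h
  · rw [star_smul_dotProduct_mulVec_smul, ← hx0, mul_zero]
  · simpa [star_smul, mulVec_smul, smul_dotProduct, dotProduct_smul] using hxy

lemma convex_numRange : Convex ℝ (numRange A) := by
  intro p hp q hq a b ha hb hab
  obtain rfl | hpq := eq_or_ne p q
  · rwa [← add_smul, hab, one_smul]
  have hqp : q - p ≠ 0 := sub_ne_zero.mpr hpq.symm
  set A' := (q - p)⁻¹ • A + (-(q - p)⁻¹ * p) • (1 : Matrix (Fin n) (Fin n) ℂ)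
  have hA' : ∀ x : Fin n → ℂ, star x ⬝ᵥ x = 1 →
      star x ⬝ᵥ (A' *ᵥ x) = (star x ⬝ᵥ (A *ᵥ x) - p) / (q - p) := fun x hx => by
    rw [star_dotProduct_smul_add_smul_one_mulVec A _ _ hx]
    ring
  have h0 : 0 ∈ numRange A' := by
    obtain ⟨x, hx, rfl⟩ := hp
    exact ⟨x, hx, by rw [hA' x hx, sub_self, zero_div]⟩
  have h1 : 1 ∈ numRange A' := by
    obtain ⟨x, hx, rfl⟩ := hq
    exact ⟨x, hx, by rw [hA' x hx, div_self hqp]⟩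
  obtain ⟨v, hv, hvb⟩ :=
    ofReal_mem_numRange_of_zero_mem_of_one_mem A' h0 h1 ⟨hb, by linarith⟩
  refine ⟨v, hv, ?_⟩
  rw [hA' v hv, eq_div_iff hqp] at hvb
  have ha' : (a : ℂ) = 1 - b := by
    rw [eq_sub_iff_add_eq]
    exact_mod_cast hab
  rw [Complex.real_smul, Complex.real_smul, ha']
  linear_combination hvb

lemma numRange_eq_iInter [NeZero n] :
    numRange A = ⋂ θ ∈ Set.Ico (0 : ℝ) (2 * Real.pi),
      {μ : ℂ | (Complex.exp (θ * Complex.I) * μ).re ≤ maxEig (reT θ A)} := by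
  refine Set.Subset.antisymm
    (fun z hz => Set.mem_iInter₂.2 fun θ _ => (isGreatest_maxEig_reT A θ).2 ⟨z, hz, rfl⟩)
    fun μ hμ => ?_
  by_contra hμA
  obtain ⟨θ, hθ, hsep⟩ :=
    (convex_numRange A).exists_mem_Ico_re_exp_mul_lt (isCompact_numRange A).isClosed hμA
  obtain ⟨z, hz, hzA⟩ := (isGreatest_maxEig_reT A θ).1
  have hμθ : (Complex.exp (θ * Complex.I) * μ).re ≤ maxEig (reT θ A) :=
    Set.mem_iInter₂.1 hμ θ hθ
  exact (hsep z hz).not_ge (hμθ.trans hzA.ge)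

end NumRange

theorem stmt0 {n : ℕ} (hn : 1 ≤ n) (A : Matrix (Fin n) (Fin n) ℂ) :
    (numRange A =
      ⋂ θ ∈ Set.Ico (0 : ℝ) (2 * Real.pi),
        {μ : ℂ | (Complex.exp (θ * Complex.I) * μ).re ≤ maxEig (reT θ A)}) ∧
    (∀ B : Matrix (Fin n) (Fin n) ℂ,
      numRange B ⊆ numRange A ↔
        ∀ θ ∈ Set.Ico (0 : ℝ) (2 * Real.pi), maxEig (reT θ B) ≤ maxEig (reT θ A)) := by
  have : NeZero n := ⟨by omega⟩
  refine ⟨numRange_eq_iInter A, fun B => ⟨fun hBA θ _ => ?_, fun hAB z hz => ?_⟩⟩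
  · obtain ⟨z, hz, hzB⟩ := (isGreatest_maxEig_reT B θ).1
    exact hzB ▸ (isGreatest_maxEig_reT A θ).2 ⟨z, hBA hz, rfl⟩
  · rw [numRange_eq_iInter A]
    exact Set.mem_iInter₂.2 fun θ hθ =>
      ((isGreatest_maxEig_reT B θ).2 ⟨z, hz, rfl⟩).trans (hAB θ hθ)
end

section
/- Let n ≥ 2, let a₁, …, aₙ be real numbers with aⱼ > 0 for all j, let A = S(a₁, …, aₙ), and fix θ ∈ [0, 2π). Then every eigenvalue of the Hermitian matrix Re(e^{iθ}A) has multiplicity at most 2 (equivalently, the kernel of λI − Re(e^{iθ}A) has dimension at most 2 for every real λ). -/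
/-!
Row `r` of `μI - Re(e^{iθ} S(a))` has nonzero entries only in the columns `r - 1, r, r + 1`
(mod `n`), and the entry in column `r + 1` is `-e^{iθ} aᵣ / 2 ≠ 0`. So for `1 ≤ r ≤ n - 2` the
equation of row `r` solves for `v (r + 1)` in terms of earlier coordinates: a kernel vector is
determined by `v 0` and `v 1`.
-/

open Matrix BigOperators

namespace Matrix

variable {K ι : Type*} [Field K] {n m : ℕ}

theorem eq_zero_of_mulVec_eq_zero_of_pivots {M : Matrix ι (Fin n) K}
    (hM : ∀ k : Fin n, m ≤ k → ∃ r, M r k ≠ 0 ∧ ∀ j, k < j → M r j = 0)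
    {v : Fin n → K} (hv : M *ᵥ v = 0) (hvm : ∀ j : Fin n, (j : ℕ) < m → v j = 0) :
    v = 0 := by
  funext k
  induction k using WellFoundedLT.induction with
  | _ k ih =>
  by_cases hk : (k : ℕ) < m
  · exact hvm k hk
  obtain ⟨r, hrk, hr⟩ := hM k (not_lt.1 hk)
  have hrow : (M *ᵥ v) r = M r k * v k := by
    refine Finset.sum_eq_single k (fun j _ hjk => ?_) (absurd (Finset.mem_univ k))
    rcases lt_or_gt_of_ne hjk with hj | hj
    · simp [ih j hj]
    · simp [hr j hj]
  rw [hv, Pi.zero_apply] at hrow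
  exact (mul_eq_zero.1 hrow.symm).resolve_left hrk

theorem finrank_ker_toLin'_le_of_pivots {M : Matrix ι (Fin n) K}
    (hM : ∀ k : Fin n, m ≤ k → ∃ r, M r k ≠ 0 ∧ ∀ j, k < j → M r j = 0) :
    Module.finrank K (LinearMap.ker (toLin' M)) ≤ m := by
  rcases le_total n m with hnm | hmn
  · exact (Submodule.finrank_le _).trans (by simpa using hnm)
  -- a kernel vector is determined by its first `m` coordinates
  let P := (LinearMap.funLeft K K (Fin.castLE hmn)).comp (LinearMap.ker (toLin' M)).subtype
  have hP : Function.Injective P := by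
    rw [← LinearMap.ker_eq_bot, LinearMap.ker_eq_bot']
    rintro ⟨v, hv⟩ hPv
    refine Subtype.ext (eq_zero_of_mulVec_eq_zero_of_pivots hM hv fun j hj => ?_)
    simpa [P] using congrFun hPv ⟨j, hj⟩
  exact (LinearMap.finrank_le_finrank_of_injective hP).trans (by simp)

end Matrix

theorem reT_cyc_apply {n : ℕ} (θ : ℝ) (a : Fin n → ℂ) (i j : Fin n) :
    reT θ (cyc a) i j = (1 / 2) * (Complex.exp (θ * Complex.I) *
      (if (j : ℕ) = ((i : ℕ) + 1) % n then a i else 0) + Complex.exp (-(θ * Complex.I)) *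
      (if (i : ℕ) = ((j : ℕ) + 1) % n then star (a j) else 0)) := by
  simp [reT, cyc, apply_ite (star : ℂ → ℂ)]

theorem sub_reT_cyc_pivot {n : ℕ} {a : Fin n → ℂ} (ha : ∀ j, a j ≠ 0) (θ : ℝ) (μ : ℂ)
    (k : Fin n) (hk : 2 ≤ (k : ℕ)) :
    ∃ r, (μ • 1 - reT θ (cyc a)) r k ≠ 0 ∧ ∀ j, k < j → (μ • 1 - reT θ (cyc a)) r j = 0 := by
  let r : Fin n := ⟨k - 1, by omega⟩
  have hr : (r : ℕ) + 1 = k := by simp only [r]; omega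
  have hsucc_mod : ∀ j : Fin n, k ≤ j → (r : ℕ) ≠ ((j : ℕ) + 1) % n := by
    intro j hj
    have hkj : (k : ℕ) ≤ j := hj
    rcases (show (j : ℕ) + 1 ≤ n from j.isLt).eq_or_lt with hjn | hjn
    · rw [hjn, Nat.mod_self]; omega
    · rw [Nat.mod_eq_of_lt hjn]; omega
  refine ⟨r, ?_, fun j hj => ?_⟩
  · have hrk : r ≠ k := Fin.ne_of_val_ne (by omega)
    have hkr : (k : ℕ) = ((r : ℕ) + 1) % n := by rw [hr, Nat.mod_eq_of_lt k.isLt]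
    rw [Matrix.sub_apply, Matrix.smul_apply, one_apply_ne hrk, reT_cyc_apply, if_pos hkr,
      if_neg (hsucc_mod k le_rfl)]
    simp [ha r, Complex.exp_ne_zero]
  · have hkj : (k : ℕ) < j := hj
    have hrj : r ≠ j := Fin.ne_of_val_ne (by omega)
    have hjr : (j : ℕ) ≠ ((r : ℕ) + 1) % n := by rw [hr, Nat.mod_eq_of_lt k.isLt]; omega
    rw [Matrix.sub_apply, Matrix.smul_apply, one_apply_ne hrj, reT_cyc_apply, if_neg hjr,
      if_neg (hsucc_mod j hj.le)]
    simp

theorem stmt1_general {n : ℕ} (a : Fin n → ℝ) (ha : ∀ j, 0 < a j)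
    (θ : ℝ) (μ : ℝ) :
    Module.finrank ℂ
      (LinearMap.ker (Matrix.toLin'
        ((μ : ℂ) • (1 : Matrix (Fin n) (Fin n) ℂ) - reT θ (cyc fun j => (a j : ℂ))))) ≤ 2 :=
  Matrix.finrank_ker_toLin'_le_of_pivots
    (sub_reT_cyc_pivot (fun j => Complex.ofReal_ne_zero.2 (ha j).ne') θ μ)

/-- Every eigenvalue of `Re(e^{iθ} S(a))` has multiplicity at most `2`:
the kernel of `μI - Re(e^{iθ}A)` has dimension at most `2` for every real `μ`. -/
theorem stmt1 {n : ℕ} (hn : 2 ≤ n) (a : Fin n → ℝ) (ha : ∀ j, 0 < a j)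
    (θ : ℝ) (hθ : θ ∈ Set.Ico (0 : ℝ) (2 * Real.pi)) (μ : ℝ) :
    Module.finrank ℂ
      (LinearMap.ker (Matrix.toLin'
        ((μ : ℂ) • (1 : Matrix (Fin n) (Fin n) ℂ) - reT θ (cyc fun j => (a j : ℂ))))) ≤ 2 :=
  stmt1_general a ha θ μ
end

section
/- Let n = 2k be even with k ≥ 1, let a₁, …, aₙ be real numbers with aⱼ > 0 for all j, and let A = S(a₁, …, aₙ). Then for every θ ∈ ℝ and every z ∈ ℂ, det(zI − 2·Re(e^{iθ}A)) = det(zI − (iA − iA*)) + (−1)^k · 2·∏_{j=1}^n aⱼ − 2·(∏_{j=1}^n aⱼ)·cos(nθ). -/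
open Matrix BigOperators

/-!
Put `M(w) = w • S + w⁻¹ • Sᵀ` with `S = S(a)`. Conjugating `z - M(w)` by `diag(wⁱ)` pushes all of
its dependence on `w` into the two corner entries, which become `wⁿ aₙ` and `w⁻ⁿ aₙ`; what remains
is the characteristic matrix `P` of the weighted path. The determinant is affine in each corner
entry. The coefficient of the product of the corners is multiplied by `wⁿ w⁻ⁿ = 1`, and the
coefficient of each single corner is, up to sign, a cofactor of the symmetric matrix `P`, whose
relevant minor is triangular with diagonal `-a₁, …, -aₙ₋₁`. Hence
`det(z - M(w)) = c(z) - (wⁿ + w⁻ⁿ) ∏ aⱼ`, and the theorem compares `w = e^{iθ}`, where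
`wⁿ + w⁻ⁿ = 2 cos nθ`, with `w = i`, where `wⁿ + w⁻ⁿ = 2 (-1)^k`.
-/

namespace Matrix

theorem updateRow_add_single_of_ne {m n α : Type*} [DecidableEq m] [DecidableEq n]
    [AddZeroClass α] (M : Matrix m n α) {i i' : m} (h : i ≠ i') (j : n) (x : α) (v : n → α) :
    (M + single i j x).updateRow i' v = M.updateRow i' v + single i j x := by
  ext a b
  rcases eq_or_ne a i' with rfl | ha
  · simp [h]
  · simp [ha]

variable {n R : Type*} [Fintype n] [DecidableEq n] [CommRing R]

theorem det_add_single (M : Matrix n n R) (i j : n) (x : R) :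
    (M + single i j x).det = M.det + x * M.adjugate j i := by
  have : M + single i j x = M.updateRow i (M i + x • Pi.single j 1) := by
    ext a b
    rcases eq_or_ne a i with rfl | ha
    · simp [single_apply, Pi.single_apply, eq_comm]
    · simp [ha.symm, ha]
  rw [this, det_updateRow_add, updateRow_eq_self, det_updateRow_smul, adjugate_apply]

theorem det_add_single_add_single (M : Matrix n n R) {i i' : n} (h : i ≠ i') (j j' : n)
    (x y : R) :
    (M + single i j x + single i' j' y).det = M.det + x * M.adjugate j i + y * M.adjugate j' i'
      + x * y * (M.updateRow i' (Pi.single j' 1)).adjugate j i := by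
  rw [det_add_single, det_add_single, adjugate_apply (M + _), updateRow_add_single_of_ne _ h,
    det_add_single, ← adjugate_apply]
  ring

end Matrix

open Function

variable {m : ℕ}

theorem cyc_apply (a : Fin (m + 1) → ℂ) (i j : Fin (m + 1)) :
    cyc a i j = if j = i + 1 then a i else 0 := by
  simp [cyc, Fin.ext_iff, Fin.val_add]

theorem cyc_update_last_zero_apply (a : Fin (m + 1) → ℂ) (i j : Fin (m + 1)) :
    cyc (update a (Fin.last m) 0) i j = if (j : ℕ) = i + 1 then a i else 0 := by
  rcases eq_or_ne i (Fin.last m) with rfl | hi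
  · rw [cyc_apply, update_self, ite_self, Fin.val_last, if_neg (by have := j.isLt; omega)]
  · simp [cyc_apply, hi, Fin.ext_iff, Fin.val_add_one_of_lt (Fin.lt_last_iff_ne_last.2 hi)]

theorem cyc_update_last (a : Fin (m + 1) → ℂ) (x : ℂ) :
    cyc (update a (Fin.last m) x) = cyc (update a (Fin.last m) 0) + single (Fin.last m) 0 x := by
  ext i j
  rcases eq_or_ne i (Fin.last m) with rfl | hi
  · simp [cyc_apply, single_apply, eq_comm]
  · simp [cyc_apply, hi, hi.symm]

theorem diagonal_mul_cyc (d a : Fin (m + 1) → ℂ) : diagonal d * cyc a = cyc (d * a) := by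
  ext i j
  simp [diagonal_mul, cyc_apply]

theorem cyc_mul_diagonal (a d : Fin (m + 1) → ℂ) :
    cyc a * diagonal d = cyc fun i => a i * d (i + 1) := by
  ext i j
  simp only [mul_diagonal, cyc_apply]
  split_ifs with h <;> simp [h]

theorem conjTranspose_cyc {n : ℕ} (a : Fin n → ℂ) : (cyc a)ᴴ = (cyc (star a))ᵀ := by
  ext i j
  simp only [cyc, conjTranspose_apply, transpose_apply, of_apply]
  split_ifs <;> simp

theorem smul_cyc {n : ℕ} (c : ℂ) (a : Fin n → ℂ) : c • cyc a = cyc (c • a) := by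
  ext i j
  simp [cyc]

theorem diagonal_pow_mul_smul_cyc (w : ℂ) (a : Fin (m + 1) → ℂ) :
    diagonal (fun i : Fin (m + 1) => w ^ (i : ℕ)) * (w • cyc a)
      = cyc (update a (Fin.last m) (w ^ (m + 1) * a (Fin.last m)))
          * diagonal (fun i : Fin (m + 1) => w ^ (i : ℕ)) := by
  rw [Matrix.mul_smul, diagonal_mul_cyc, cyc_mul_diagonal, smul_cyc]
  congr 1
  funext i
  rw [Fin.val_add_one]
  split_ifs with hi
  · subst hi
    simp only [Pi.smul_apply, Pi.mul_apply, Fin.val_last, smul_eq_mul, pow_succ, update_self,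
      pow_zero, mul_one]
    ring
  · simp only [Pi.smul_apply, Pi.mul_apply, smul_eq_mul, pow_succ, update_of_ne hi]
    ring

theorem diagonal_pow_mul_inv_smul_cyc_transpose {w : ℂ} (hw : w ≠ 0) (a : Fin (m + 1) → ℂ) :
    diagonal (fun i : Fin (m + 1) => w ^ (i : ℕ)) * (w⁻¹ • (cyc a)ᵀ)
      = (cyc (update a (Fin.last m) (w⁻¹ ^ (m + 1) * a (Fin.last m))))ᵀ
          * diagonal (fun i : Fin (m + 1) => w ^ (i : ℕ)) := by
  rw [← diagonal_transpose, ← transpose_mul, ← transpose_smul, ← transpose_mul, Matrix.smul_mul,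
    diagonal_mul_cyc, cyc_mul_diagonal, smul_cyc]
  congr 2
  funext i
  simp only [Pi.smul_apply, Pi.mul_apply, smul_eq_mul, Fin.val_add_one]
  split_ifs with hi
  · subst hi
    simp only [pow_zero, mul_one, Fin.val_last, inv_pow, update_self]
    field_simp
    ring
  · simp only [pow_succ, inv_pow, update_of_ne hi]
    field_simp

/-- `z - (T + Tᵀ)` for the weighted path `T + Tᵀ` obtained from the cycle `S(a) + S(a)ᵀ` by deleting
the edge that carries `aₙ`. -/
noncomputable def pathCharMatrix (a : Fin (m + 1) → ℂ) (z : ℂ) :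
    Matrix (Fin (m + 1)) (Fin (m + 1)) ℂ :=
  z • 1 - (cyc (update a (Fin.last m) 0) + (cyc (update a (Fin.last m) 0))ᵀ)

theorem pathCharMatrix_apply (a : Fin (m + 1) → ℂ) (z : ℂ) (i j : Fin (m + 1)) :
    pathCharMatrix a z i j = (if i = j then z else 0) - (if (j : ℕ) = i + 1 then a i else 0)
      - (if (i : ℕ) = j + 1 then a j else 0) := by
  simp only [pathCharMatrix, Matrix.sub_apply, Matrix.add_apply, Matrix.smul_apply, one_apply,
    transpose_apply, cyc_update_last_zero_apply, smul_eq_mul, mul_ite, mul_one, mul_zero]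
  ring

theorem pathCharMatrix_isSymm (a : Fin (m + 1) → ℂ) (z : ℂ) : (pathCharMatrix a z).IsSymm := by
  simp [IsSymm, pathCharMatrix, add_comm]

theorem adjugate_pathCharMatrix_zero_last (a : Fin (m + 1) → ℂ) (z : ℂ) :
    (pathCharMatrix a z).adjugate 0 (Fin.last m) = ∏ r : Fin m, a r.castSucc := by
  have hlower : ((pathCharMatrix a z).submatrix Fin.castSucc Fin.succ).IsLowerTriangular := by
    intro r c hrc
    have : (r : ℕ) < c := hrc
    simp only [submatrix_apply, pathCharMatrix_apply, Fin.ext_iff, Fin.val_castSucc, Fin.val_succ,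
      Nat.add_right_cancel_iff]
    split_ifs <;> first | omega | simp
  rw [adjugate_fin_succ_eq_det_submatrix, Fin.succAbove_last, Fin.succAbove_zero,
    det_of_isLowerTriangular _ hlower]
  have hdiag (r : Fin m) : pathCharMatrix a z r.castSucc r.succ = -a r.castSucc := by
    simp [pathCharMatrix_apply, Fin.ext_iff]
    omega
  simp only [submatrix_apply, hdiag, Finset.prod_neg, Finset.card_univ, Fintype.card_fin,
    Fin.val_last, Fin.val_zero, add_zero, ← mul_assoc, ← mul_pow, neg_one_mul, neg_neg, one_pow,
    one_mul]

theorem det_sub_smul_cyc_add_inv_smul_transpose {w : ℂ} (hw : w ≠ 0) (a : Fin (m + 1) → ℂ)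
    (z : ℂ) :
    (z • 1 - (w • cyc a + w⁻¹ • (cyc a)ᵀ)).det
      = (z • 1 - (cyc (update a (Fin.last m) (w ^ (m + 1) * a (Fin.last m)))
          + (cyc (update a (Fin.last m) (w⁻¹ ^ (m + 1) * a (Fin.last m))))ᵀ)).det := by
  set D := diagonal fun i : Fin (m + 1) => w ^ (i : ℕ)
  have hD : D.det ≠ 0 := by simp [D, det_diagonal, Finset.prod_ne_zero_iff, hw]
  have hconj := congrArg det <| show D * (z • 1 - (w • cyc a + w⁻¹ • (cyc a)ᵀ))
      = (z • 1 - (cyc (update a (Fin.last m) (w ^ (m + 1) * a (Fin.last m)))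
          + (cyc (update a (Fin.last m) (w⁻¹ ^ (m + 1) * a (Fin.last m))))ᵀ)) * D by
    rw [Matrix.mul_sub, Matrix.sub_mul, Matrix.mul_add, Matrix.add_mul, diagonal_pow_mul_smul_cyc,
      diagonal_pow_mul_inv_smul_cyc_transpose hw, Matrix.mul_smul, Matrix.smul_mul,
      Matrix.mul_one, Matrix.one_mul]
  rw [det_mul, det_mul, mul_comm D.det] at hconj
  exact mul_right_cancel₀ hD hconj

theorem sub_cyc_update_last (a : Fin (m + 1) → ℂ) (z x y : ℂ) :
    z • 1 - (cyc (update a (Fin.last m) x) + (cyc (update a (Fin.last m) y))ᵀ)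
      = pathCharMatrix a z + single (Fin.last m) 0 (-x) + single 0 (Fin.last m) (-y) := by
  rw [cyc_update_last a x, cyc_update_last a y, pathCharMatrix, transpose_add, transpose_single,
    ← single_neg, ← single_neg]
  abel

theorem exists_det_sub_cyc_update_last (hm : m ≠ 0) (a : Fin (m + 1) → ℂ) (z : ℂ) :
    ∃ γ, ∀ x y, (z • 1 - (cyc (update a (Fin.last m) x) + (cyc (update a (Fin.last m) y))ᵀ)).det
      = (pathCharMatrix a z).det - (x + y) * ∏ r : Fin m, a r.castSucc + x * y * γ := by
  refine ⟨((pathCharMatrix a z).updateRow 0 (Pi.single (Fin.last m) 1)).adjugate 0 (Fin.last m),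
    fun x y => ?_⟩
  rw [sub_cyc_update_last, det_add_single_add_single _ (by simp [Fin.ext_iff, hm]),
    (pathCharMatrix_isSymm a z).adjugate.apply 0, adjugate_pathCharMatrix_zero_last]
  ring

theorem exists_det_sub_smul_cyc_add_inv_smul_transpose {n : ℕ} (hn : 2 ≤ n) (a : Fin n → ℂ)
    (z : ℂ) : ∃ c, ∀ w : ℂ, w ≠ 0 →
      (z • 1 - (w • cyc a + w⁻¹ • (cyc a)ᵀ)).det = c - (w ^ n + w⁻¹ ^ n) * ∏ j, a j := by
  obtain ⟨m, rfl⟩ : ∃ m, n = m + 1 := ⟨n - 1, by omega⟩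
  obtain ⟨γ, hγ⟩ := exists_det_sub_cyc_update_last (by omega) a z
  refine ⟨(pathCharMatrix a z).det + a (Fin.last m) ^ 2 * γ, fun w hw => ?_⟩
  have hpow : w ^ (m + 1) * w⁻¹ ^ (m + 1) = 1 := by rw [← mul_pow, mul_inv_cancel₀ hw, one_pow]
  rw [det_sub_smul_cyc_add_inv_smul_transpose hw, hγ, Fin.prod_univ_castSucc]
  linear_combination (a (Fin.last m) ^ 2 * γ) * hpow

theorem stmt2_general {k : ℕ} (hk : 1 ≤ k) (a : Fin (2 * k) → ℝ)
    (A : Matrix (Fin (2 * k)) (Fin (2 * k)) ℂ) (hA : A = cyc fun j => (a j : ℂ))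
    (θ : ℝ) (z : ℂ) :
    (z • (1 : Matrix (Fin (2 * k)) (Fin (2 * k)) ℂ) - (2 : ℂ) • reT θ A).det =
      (z • (1 : Matrix (Fin (2 * k)) (Fin (2 * k)) ℂ)
          - (Complex.I • A - Complex.I • Aᴴ)).det
        + (-1) ^ k * 2 * (∏ j, (a j : ℂ))
        - 2 * (∏ j, (a j : ℂ)) * Real.cos (2 * k * θ) := by
  have hconj : Aᴴ = Aᵀ := by
    rw [hA, conjTranspose_cyc]
    congr 2
    funext j
    simp
  obtain ⟨c, hc⟩ :=
    exists_det_sub_smul_cyc_add_inv_smul_transpose (by omega) (fun j => (a j : ℂ)) z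
  have hreT : (2 : ℂ) • reT θ A
      = Complex.exp (θ * Complex.I) • A + (Complex.exp (θ * Complex.I))⁻¹ • Aᵀ := by
    rw [reT, smul_smul, Complex.exp_neg, hconj]
    norm_num
  set e := Complex.exp (θ * Complex.I)
  have hI : Complex.I • A - Complex.I • Aᴴ = Complex.I • A + Complex.I⁻¹ • Aᵀ := by
    rw [Complex.inv_I, neg_smul, hconj, sub_eq_add_neg]
  have hIpow : Complex.I ^ (2 * k) + Complex.I⁻¹ ^ (2 * k) = 2 * (-1) ^ k := by
    rw [Complex.inv_I, pow_mul, pow_mul, neg_sq, Complex.I_sq]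
    ring
  have hepow : e ^ (2 * k) + e⁻¹ ^ (2 * k) = 2 * Real.cos (2 * k * θ) := by
    rw [← Complex.exp_neg, ← Complex.exp_nat_mul, ← Complex.exp_nat_mul, Complex.ofReal_cos,
      Complex.two_cos]
    push_cast
    ring_nf
  rw [hreT, hI, hA, hc e (Complex.exp_ne_zero _), hc Complex.I Complex.I_ne_zero]
  linear_combination (∏ j, (a j : ℂ)) * (hIpow - hepow)

theorem stmt2 {k : ℕ} (hk : 1 ≤ k) (a : Fin (2 * k) → ℝ) (ha : ∀ j, 0 < a j)
    (A : Matrix (Fin (2 * k)) (Fin (2 * k)) ℂ) (hA : A = cyc fun j => (a j : ℂ))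
    (θ : ℝ) (z : ℂ) :
    (z • (1 : Matrix (Fin (2 * k)) (Fin (2 * k)) ℂ) - (2 : ℂ) • reT θ A).det =
      (z • (1 : Matrix (Fin (2 * k)) (Fin (2 * k)) ℂ)
          - (Complex.I • A - Complex.I • Aᴴ)).det
        + (-1) ^ k * 2 * (∏ j, (a j : ℂ))
        - 2 * (∏ j, (a j : ℂ)) * Real.cos (2 * k * θ) :=
  stmt2_general hk a A hA θ z
end

section
/- Let f(t) and g(t) be monic real polynomials of degree n ≥ 1, each having all n of its roots real, and suppose f(t) = g(t) − h(t) for a real polynomial h(t) of degree smaller than n. If either (a) h(t₁) ≥ 0 where t₁ is the largest real zero of g, or (b) h(t) > 0 for all t ≥ t₂ where t₂ is the largest real zero of f, then the largest real zero of f is greater than or equal to the largest real zero of g. -/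
open Polynomial

/-! If `t₂ < t₁`, then `t₁` lies beyond every root of the monic, real-rooted `f`, so `f(t₁) > 0`;
but `g(t₁) = 0` gives `f(t₁) = -h(t₁)`, and either hypothesis on `h` makes this `≤ 0`. -/

theorem Polynomial.eval_pos_of_roots_lt {p : ℝ[X]} (hp : p.Monic)
    (hroots : p.roots.card = p.natDegree) {t : ℝ} (ht : ∀ r : ℝ, p.IsRoot r → r < t) :
    0 < p.eval t := by
  rw [← prod_multiset_X_sub_C_of_monic_of_roots_card_eq hp hroots, eval_multiset_prod]
  refine Multiset.prod_pos fun a ha => ?_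
  obtain ⟨r, hr, rfl⟩ := Multiset.mem_map.mp (Multiset.map_map _ _ _ ▸ ha)
  have : r < t := ht r ((mem_roots hp.ne_zero).mp hr)
  simpa using this

theorem stmt5_general {n : ℕ} (f g h : Polynomial ℝ)
    (hfm : f.Monic) (hfd : f.natDegree = n) (hfr : f.roots.card = n)
    (hfgh : f = g - h)
    (t₁ t₂ : ℝ)
    (ht₁ : g.IsRoot t₁ ∧ ∀ t : ℝ, g.IsRoot t → t ≤ t₁)
    (ht₂ : f.IsRoot t₂ ∧ ∀ t : ℝ, f.IsRoot t → t ≤ t₂)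
    (hcase : 0 ≤ h.eval t₁ ∨ ∀ t : ℝ, t₂ ≤ t → 0 < h.eval t) :
    t₁ ≤ t₂ := by
  by_contra! hlt
  have hf_pos : 0 < f.eval t₁ :=
    eval_pos_of_roots_lt hfm (hfr.trans hfd.symm) fun r hr => (ht₂.2 r hr).trans_lt hlt
  have hf_eval : f.eval t₁ = -h.eval t₁ := by
    simp [hfgh, ht₁.1.eq_zero]
  have hh_nonneg : 0 ≤ h.eval t₁ := hcase.elim id fun hpos => (hpos t₁ hlt.le).le
  linarith

theorem stmt5 {n : ℕ} (hn : 1 ≤ n) (f g h : Polynomial ℝ)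
    (hfm : f.Monic) (hfd : f.natDegree = n) (hfr : f.roots.card = n)
    (hgm : g.Monic) (hgd : g.natDegree = n) (hgr : g.roots.card = n)
    (hfgh : f = g - h) (hdeg : h.degree < n)
    (t₁ t₂ : ℝ)
    (ht₁ : g.IsRoot t₁ ∧ ∀ t : ℝ, g.IsRoot t → t ≤ t₁)
    (ht₂ : f.IsRoot t₂ ∧ ∀ t : ℝ, f.IsRoot t → t ≤ t₂)
    (hcase : 0 ≤ h.eval t₁ ∨ ∀ t : ℝ, t₂ ≤ t → 0 < h.eval t) :
    t₁ ≤ t₂ :=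
  stmt5_general f g h hfm hfd hfr hfgh t₁ t₂ ht₁ ht₂ hcase
end

section
/- Let n ≥ 2, let A = S(a₁, …, aₙ) with a₁, …, aₙ > 0, and set α = ∏_{j=1}^n aⱼ. Define the monic degree-n polynomial f(z) = det(zI − 2·Re(e^{iπ/(2n)}A)). Then for every θ ∈ ℝ and every z ∈ ℂ, det(zI − 2·Re(e^{iθ}A)) = f(z) − 2α·cos(nθ); in particular the polynomial det(zI − 2·Re(e^{iθ}A)) + 2α·cos(nθ) is independent of θ. -/
open Matrix BigOperators

/-!
Conjugating by `diag(1, ω, …, ω^{n-1})`, `ω = e^{iθ}`, turns `z - 2 Re(e^{iθ} A)` into `z - J`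
minus the two corner entries `ω^{±n} aₙ`, where `J` is the `θ`-free tridiagonal matrix with
off-diagonals `a₁, …, a_{n-1}`. The determinant is affine in each corner entry, so it equals
`c₀ + c₁ ω^n + c₂ ω^{-n} + c₃` because `ω^n ω^{-n} = 1`. Here `c₁, c₂` are `-aₙ` times the corner
cofactors of the symmetric matrix `z - J`, whose minors are triangular with diagonal
`-a₁, …, -a_{n-1}`; so `c₁ = c₂ = -α`, and `ω^n + ω^{-n} = 2 cos(nθ)` vanishes at `θ = π/(2n)`.
-/

theorem updateRow_sub_single {ι R : Type*} [DecidableEq ι] [AddGroup R] {i j : ι} (hij : i ≠ j)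
    (M : Matrix ι ι R) (x : R) (r : ι → R) :
    updateRow (M - single i j x) j r = updateRow M j r - single i j x := by
  ext k l
  by_cases hk : k = j
  · subst hk
    simp [single_apply_of_ne, hij]
  · simp [hk]

section SingleEntry

variable {ι R : Type*} [Fintype ι] [DecidableEq ι] [CommRing R]

theorem det_sub_single (M : Matrix ι ι R) (i j : ι) (x : R) :
    (M - single i j x).det = M.det - x * adjugate M j i := by
  have hrow : M - single i j x = updateRow M i (M i + (-x) • Pi.single j 1) := by
    ext k l
    by_cases hk : k = i
    · subst hk
      by_cases hl : l = j
      · simp [hl, sub_eq_add_neg]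
      · simp [hl, single_apply_of_ne, Ne.symm hl]
    · simp [hk, single_apply_of_ne, Ne.symm hk]
  rw [hrow, det_updateRow_add, det_updateRow_smul, updateRow_eq_self, adjugate_apply]
  ring

theorem det_sub_single_sub_single {i j : ι} (hij : i ≠ j) (M : Matrix ι ι R) (x y : R) :
    (M - single i j x - single j i y).det = M.det - x * adjugate M j i - y * adjugate M i j
      + x * y * adjugate (updateRow M j (Pi.single i 1)) j i := by
  rw [det_sub_single, det_sub_single, adjugate_apply (M - single i j x), updateRow_sub_single hij,
    det_sub_single, ← adjugate_apply]
  ring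

theorem diagonal_mul_single_mul_diagonal (d e : ι → R) (i j : ι) (c : R) :
    diagonal d * single i j c * diagonal e = single i j (d i * c * e j) := by
  ext k l
  rw [mul_diagonal, diagonal_mul, single_apply, single_apply]
  split_ifs with h
  · rw [h.1, h.2]
  · ring

end SingleEntry

/-- `S(a₁, …, a_{n-1}, 0)`: the cyclic shift without its corner entry. -/
noncomputable def weightedShift {n : ℕ} (a : Fin n → ℂ) : Matrix (Fin n) (Fin n) ℂ :=
  of fun i j => if (j : ℕ) = i + 1 then a i else 0

noncomputable def jacobi {n : ℕ} (a : Fin n → ℂ) : Matrix (Fin n) (Fin n) ℂ :=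
  weightedShift a + (weightedShift a)ᵀ

noncomputable def powDiagonal (n : ℕ) (ω : ℂ) : Matrix (Fin n) (Fin n) ℂ :=
  diagonal fun k => ω ^ (k : ℕ)

theorem cyc_eq_weightedShift_add_single {m : ℕ} (a : Fin (m + 1) → ℂ) :
    cyc a = weightedShift a + single (Fin.last m) 0 (a (Fin.last m)) := by
  ext i j
  rw [Matrix.add_apply, single_apply]
  simp only [cyc, weightedShift, of_apply]
  rcases eq_or_ne i (Fin.last m) with rfl | hi
  · have : (j : ℕ) ≠ m + 1 := by omega
    rw [Fin.val_last, Nat.mod_self, if_neg this, zero_add]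
    by_cases hj : j = 0
    · simp [hj]
    · simp [hj, Ne.symm hj, Fin.val_eq_zero_iff]
  · have hi' : (i : ℕ) + 1 < m + 1 := by have := Fin.val_lt_last hi; omega
    simp [Nat.mod_eq_of_lt hi', Ne.symm hi]

theorem conjTranspose_cyc_ofReal {n : ℕ} (a : Fin n → ℝ) :
    (cyc fun j => (a j : ℂ))ᴴ = (cyc fun j => (a j : ℂ))ᵀ := by
  ext i j
  simp only [cyc, conjTranspose_apply, transpose_apply, of_apply]
  split_ifs <;> simp

theorem two_smul_reT {n : ℕ} (θ : ℝ) (A : Matrix (Fin n) (Fin n) ℂ) :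
    (2 : ℂ) • reT θ A
      = Complex.exp (θ * Complex.I) • A + (Complex.exp (θ * Complex.I))⁻¹ • Aᴴ := by
  rw [reT, smul_smul, Complex.exp_neg]
  norm_num

section Gauge

variable {n : ℕ} {ω : ℂ}

theorem powDiagonal_mul_powDiagonal_inv (hω : ω ≠ 0) :
    powDiagonal n ω * powDiagonal n ω⁻¹ = 1 := by
  rw [powDiagonal, powDiagonal, diagonal_mul_diagonal, ← diagonal_one]
  simp_rw [← mul_pow, mul_inv_cancel₀ hω, one_pow]

theorem det_powDiagonal_mul_mul_powDiagonal_inv (hω : ω ≠ 0) (X : Matrix (Fin n) (Fin n) ℂ) :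
    (powDiagonal n ω * X * powDiagonal n ω⁻¹).det = X.det := by
  rw [det_mul, det_mul, mul_comm _ X.det, mul_assoc, ← det_mul,
    powDiagonal_mul_powDiagonal_inv hω, det_one, mul_one]

theorem powDiagonal_mul_weightedShift_mul (hω : ω ≠ 0) (a : Fin n → ℂ) :
    powDiagonal n ω * weightedShift a * powDiagonal n ω⁻¹ = ω⁻¹ • weightedShift a := by
  ext i j
  rw [powDiagonal, powDiagonal, mul_diagonal, diagonal_mul, Matrix.smul_apply, weightedShift,
    of_apply]
  split_ifs with h
  · rw [h, pow_succ, inv_pow, smul_eq_mul]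
    field_simp
  · simp

theorem powDiagonal_mul_weightedShift_transpose_mul (hω : ω ≠ 0) (a : Fin n → ℂ) :
    powDiagonal n ω * (weightedShift a)ᵀ * powDiagonal n ω⁻¹ = ω • (weightedShift a)ᵀ := by
  have h := congrArg transpose (powDiagonal_mul_weightedShift_mul (inv_ne_zero hω) a)
  rwa [inv_inv, transpose_mul, transpose_mul, powDiagonal, powDiagonal, diagonal_transpose,
    diagonal_transpose, ← Matrix.mul_assoc, transpose_smul] at h

end Gauge

theorem powDiagonal_mul_charMatrix_cyc_mul {m : ℕ} {ω : ℂ} (hω : ω ≠ 0) (a : Fin (m + 1) → ℂ)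
    (z : ℂ) :
    powDiagonal (m + 1) ω * (z • 1 - ω • cyc a - ω⁻¹ • (cyc a)ᵀ) * powDiagonal (m + 1) ω⁻¹
      = z • 1 - jacobi a - single (Fin.last m) 0 (ω ^ (m + 1) * a (Fin.last m))
        - single 0 (Fin.last m) (ω⁻¹ ^ (m + 1) * a (Fin.last m)) := by
  rw [cyc_eq_weightedShift_add_single, transpose_add, transpose_single]
  simp only [Matrix.mul_sub, Matrix.sub_mul, Matrix.mul_add, Matrix.add_mul, Matrix.mul_smul,
    Matrix.smul_mul, smul_add, Matrix.mul_one, powDiagonal_mul_powDiagonal_inv hω,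
    powDiagonal_mul_weightedShift_mul hω, powDiagonal_mul_weightedShift_transpose_mul hω]
  rw [powDiagonal, powDiagonal, diagonal_mul_single_mul_diagonal, diagonal_mul_single_mul_diagonal]
  simp only [smul_single, smul_smul, smul_eq_mul, mul_inv_cancel₀ hω, inv_mul_cancel₀ hω, one_smul,
    Fin.val_last, Fin.val_zero, pow_zero, mul_one, one_mul]
  rw [show ω * (ω ^ m * a (Fin.last m)) = ω ^ (m + 1) * a (Fin.last m) by ring,
    show ω⁻¹ * (a (Fin.last m) * ω⁻¹ ^ m) = ω⁻¹ ^ (m + 1) * a (Fin.last m) by ring, jacobi]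
  abel

section Cofactor

variable {m : ℕ} (a : Fin (m + 1) → ℂ) (z : ℂ)

theorem charMatrix_jacobi_castSucc_succ_of_lt {i j : Fin m} (hij : i < j) :
    (z • 1 - jacobi a) i.castSucc j.succ = 0 := by
  have hij' : (i : ℕ) < j := hij
  have hne : i.castSucc ≠ j.succ := by simp [Fin.ext_iff]; omega
  simp only [jacobi, Matrix.sub_apply, Matrix.add_apply, Matrix.smul_apply, one_apply_ne hne,
    transpose_apply, weightedShift, of_apply, Fin.val_castSucc, Fin.val_succ]
  rw [if_neg (by omega), if_neg (by omega)]
  simp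

theorem charMatrix_jacobi_castSucc_succ_self (i : Fin m) :
    (z • 1 - jacobi a) i.castSucc i.succ = -a i.castSucc := by
  have hne : i.castSucc ≠ i.succ := by simp [Fin.ext_iff]
  simp only [jacobi, Matrix.sub_apply, Matrix.add_apply, Matrix.smul_apply, one_apply_ne hne,
    transpose_apply, weightedShift, of_apply, Fin.val_castSucc, Fin.val_succ]
  rw [if_pos trivial, if_neg (by omega)]
  simp

theorem adjugate_charMatrix_jacobi_zero_last :
    adjugate (z • 1 - jacobi a) 0 (Fin.last m) = ∏ i : Fin m, a i.castSucc := by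
  rw [adjugate_fin_succ_eq_det_submatrix, Fin.succAbove_last, Fin.succAbove_zero,
    det_of_isLowerTriangular ((z • 1 - jacobi a).submatrix Fin.castSucc Fin.succ) fun _ _ hij =>
      charMatrix_jacobi_castSucc_succ_of_lt a z (OrderDual.toDual_lt_toDual.mp hij)]
  simp only [submatrix_apply, charMatrix_jacobi_castSucc_succ_self, Finset.prod_neg,
    Finset.card_univ, Fintype.card_fin, Fin.val_last, Fin.val_zero, add_zero, ← mul_assoc,
    ← mul_pow, neg_one_mul, neg_neg, one_pow, one_mul]

theorem adjugate_charMatrix_jacobi_last_zero :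
    adjugate (z • 1 - jacobi a) (Fin.last m) 0 = ∏ i : Fin m, a i.castSucc := by
  have hsymm : (z • 1 - jacobi a)ᵀ = z • 1 - jacobi a := by
    rw [jacobi, transpose_sub, transpose_smul, transpose_one, transpose_add, transpose_transpose,
      add_comm (weightedShift a)ᵀ]
  rw [← adjugate_charMatrix_jacobi_zero_last a z, ← transpose_apply (adjugate _), adjugate_transpose,
    hsymm]

end Cofactor

theorem exists_det_sub_two_smul_reT_cyc_eq {n : ℕ} (hn : 2 ≤ n) (a : Fin n → ℝ) (z : ℂ) :
    ∃ K : ℂ, ∀ θ : ℝ, (z • (1 : Matrix (Fin n) (Fin n) ℂ)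
      - (2 : ℂ) • reT θ (cyc fun j => (a j : ℂ))).det
        = K - 2 * (∏ j, (a j : ℂ)) * Real.cos (n * θ) := by
  obtain ⟨m, rfl⟩ : ∃ m, n = m + 2 := ⟨n - 2, by omega⟩
  set b : Fin (m + 2) → ℂ := fun j => a j
  set T := z • 1 - jacobi b
  set l := Fin.last (m + 1)
  refine ⟨T.det + b l ^ 2 * adjugate (updateRow T 0 (Pi.single l 1)) 0 l, fun θ => ?_⟩
  set ω := Complex.exp (θ * Complex.I)
  have hω : ω ≠ 0 := Complex.exp_ne_zero _
  have hinv : ω ^ (m + 2) * ω⁻¹ ^ (m + 2) = 1 := by rw [← mul_pow, mul_inv_cancel₀ hω, one_pow]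
  have hcos : ω ^ (m + 2) + ω⁻¹ ^ (m + 2) = 2 * Real.cos (((m + 2 : ℕ) : ℝ) * θ) := by
    rw [Complex.ofReal_cos, Complex.two_cos, ← Complex.exp_neg, ← Complex.exp_nat_mul,
      ← Complex.exp_nat_mul]
    push_cast
    ring_nf
  have hprod : ∏ j, b j = (∏ i : Fin (m + 1), b i.castSucc) * b l := Fin.prod_univ_castSucc b
  rw [two_smul_reT, conjTranspose_cyc_ofReal, sub_add_eq_sub_sub,
    ← det_powDiagonal_mul_mul_powDiagonal_inv hω, powDiagonal_mul_charMatrix_cyc_mul hω,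
    det_sub_single_sub_single (Fin.last_pos.ne' : l ≠ 0), adjugate_charMatrix_jacobi_zero_last,
    adjugate_charMatrix_jacobi_last_zero, hprod]
  linear_combination (b l ^ 2 * adjugate (updateRow T 0 (Pi.single l 1)) 0 l) * hinv
    - (∏ i : Fin (m + 1), b i.castSucc) * b l * hcos

theorem stmt6_general {n : ℕ} (hn : 2 ≤ n) (a : Fin n → ℝ)
    (A : Matrix (Fin n) (Fin n) ℂ) (hA : A = cyc fun j => (a j : ℂ))
    (θ : ℝ) (z : ℂ) :
    (z • (1 : Matrix (Fin n) (Fin n) ℂ) - (2 : ℂ) • reT θ A).det =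
      (z • (1 : Matrix (Fin n) (Fin n) ℂ) - (2 : ℂ) • reT (Real.pi / (2 * n)) A).det
        - 2 * (∏ j, (a j : ℂ)) * Real.cos (n * θ) := by
  subst hA
  obtain ⟨K, hK⟩ := exists_det_sub_two_smul_reT_cyc_eq hn a z
  have hn0 : (n : ℝ) ≠ 0 := by positivity
  have hcos : Real.cos (n * (Real.pi / (2 * n))) = 0 := by
    rw [mul_div_left_comm, div_mul_cancel_right₀ hn0, ← one_div, mul_one_div,
      Real.cos_pi_div_two]
  rw [hK θ, hK, hcos, Complex.ofReal_zero]
  ring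

theorem stmt6 {n : ℕ} (hn : 2 ≤ n) (a : Fin n → ℝ) (ha : ∀ j, 0 < a j)
    (A : Matrix (Fin n) (Fin n) ℂ) (hA : A = cyc fun j => (a j : ℂ))
    (θ : ℝ) (z : ℂ) :
    (z • (1 : Matrix (Fin n) (Fin n) ℂ) - (2 : ℂ) • reT θ A).det =
      (z • (1 : Matrix (Fin n) (Fin n) ℂ) - (2 : ℂ) • reT (Real.pi / (2 * n)) A).det
        - 2 * (∏ j, (a j : ℂ)) * Real.cos (n * θ) :=
  stmt6_general hn a A hA θ z
end

section
/- Let A = S(a₁, a₂) and B = S(b₁, b₂) be 2×2 cyclic shift matrices with a₁, a₂, b₁, b₂ ≥ 0. Then W(B) ⊆ W(A) if and only if |b₁ − b₂| ≤ |a₁ − a₂| and b₁ + b₂ ≤ a₁ + a₂. -/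
/-!
Writing `t = conj x₀ · x₁`, the quadratic form of `S(a, b)` is `a t + b t̄`, and as `x` runs over
the unit sphere of `ℂ²`, `t` runs over the closed disc of radius `1/2` (AM–GM gives `|t| ≤ 1/2`).
For real `a, b` the map `t ↦ a t + b t̄` scales the real part by `a + b` and the imaginary part by
`a - b`, so `W(S(a, b))` is the ellipse with semi-axes `|a + b|/2` and `|a - b|/2`. One such ellipse
contains another exactly when both semi-axes are at least as large: test the inclusion at the
vertices `1/2` and `i/2`, and conversely shrink each coordinate separately.
-/

open Matrix BigOperators

open Metric

lemma star_dotProduct_self_eq_one_iff_fin_two {x : Fin 2 → ℂ} :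
    star x ⬝ᵥ x = 1 ↔ ‖x 0‖ ^ 2 + ‖x 1‖ ^ 2 = 1 := by
  have hsum : star x ⬝ᵥ x = ((‖x 0‖ ^ 2 + ‖x 1‖ ^ 2 : ℝ) : ℂ) := by
    simp [dotProduct, Fin.sum_univ_two, Complex.conj_mul']
  rw [hsum, Complex.ofReal_eq_one]

lemma star_dotProduct_cyc_two_mulVec (a b : ℂ) (x : Fin 2 → ℂ) :
    star x ⬝ᵥ cyc ![a, b] *ᵥ x = a * (star (x 0) * x 1) + b * star (star (x 0) * x 1) := by
  simp [cyc, mulVec, dotProduct, Fin.sum_univ_two]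
  ring

lemma norm_star_mul_le_half {z w : ℂ} (h : ‖z‖ ^ 2 + ‖w‖ ^ 2 = 1) : ‖star z * w‖ ≤ 1 / 2 := by
  rw [norm_mul, norm_star]
  nlinarith [two_mul_le_add_sq ‖z‖ ‖w‖]

lemma exists_star_mul_eq_of_norm_le_half {t : ℂ} (ht : ‖t‖ ≤ 1 / 2) :
    ∃ z w : ℂ, ‖z‖ ^ 2 + ‖w‖ ^ 2 = 1 ∧ star z * w = t := by
  -- `z = √s` real and `w = t / z`, where `s` is the larger root of `s² - s + ‖t‖² = 0`.
  set d := √(1 - 4 * ‖t‖ ^ 2)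
  have hd : d ^ 2 = 1 - 4 * ‖t‖ ^ 2 := Real.sq_sqrt (by nlinarith [norm_nonneg t])
  set s := (1 + d) / 2
  have hs : 0 < s := by positivity
  have hc : (√s : ℂ) ≠ 0 := by exact_mod_cast (Real.sqrt_pos.2 hs).ne'
  refine ⟨√s, t / √s, ?_, ?_⟩
  · rw [norm_div, div_pow, Complex.norm_real, Real.norm_eq_abs, sq_abs, Real.sq_sqrt hs.le]
    field_simp
    linear_combination (1 / 4 : ℝ) * hd
  · rw [Complex.star_def, Complex.conj_ofReal]
    field_simp

lemma numRange_cyc_two (a b : ℂ) :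
    numRange (cyc ![a, b]) = (fun t => a * t + b * star t) '' closedBall 0 (1 / 2) := by
  ext z
  constructor
  · rintro ⟨x, hx, rfl⟩
    refine ⟨star (x 0) * x 1, ?_, (star_dotProduct_cyc_two_mulVec a b x).symm⟩
    exact mem_closedBall_zero_iff.2
      (norm_star_mul_le_half (star_dotProduct_self_eq_one_iff_fin_two.1 hx))
  · rintro ⟨t, ht, rfl⟩
    obtain ⟨z, w, hzw, rfl⟩ := exists_star_mul_eq_of_norm_le_half (mem_closedBall_zero_iff.1 ht)
    refine ⟨![z, w], star_dotProduct_self_eq_one_iff_fin_two.2 hzw, ?_⟩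
    rw [star_dotProduct_cyc_two_mulVec]
    rfl

def scaleReIm (p q : ℝ) (t : ℂ) : ℂ := ⟨p * t.re, q * t.im⟩

lemma ofReal_mul_add_ofReal_mul_star (a b : ℝ) (t : ℂ) :
    (a : ℂ) * t + b * star t = scaleReIm (a + b) (a - b) t := by
  apply Complex.ext <;> simp [scaleReIm] <;> ring

lemma numRange_cyc_two_ofReal (a b : ℝ) :
    numRange (cyc ![(a : ℂ), (b : ℂ)]) = scaleReIm (a + b) (a - b) '' closedBall 0 (1 / 2) := by
  simp only [numRange_cyc_two, ofReal_mul_add_ofReal_mul_star]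

lemma abs_le_abs_of_mul_eq_mul {p P y r : ℝ} (hr : 0 < r) (hy : |y| ≤ r) (h : P * y = p * r) :
    |p| ≤ |P| := by
  have : |p| * r ≤ |P| * r := by
    rw [← abs_of_pos hr, ← abs_mul, ← h, abs_mul, abs_of_pos hr]
    exact mul_le_mul_of_nonneg_left hy (abs_nonneg P)
  exact le_of_mul_le_mul_right this hr

lemma exists_mul_eq_mul_of_abs_le {p P : ℝ} (h : |p| ≤ |P|) (x : ℝ) :
    ∃ y, |y| ≤ |x| ∧ P * y = p * x := by
  rcases eq_or_ne P 0 with rfl | hP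
  · exact ⟨0, by simp, by simp [show p = 0 by simpa using h]⟩
  · refine ⟨p * x / P, ?_, by field_simp⟩
    rw [abs_div, abs_mul, div_le_iff₀ (abs_pos.2 hP)]
    exact mul_le_mul_of_nonneg_right h (abs_nonneg x) |>.trans_eq (mul_comm _ _)

lemma norm_le_norm_of_abs_re_le_of_abs_im_le {s t : ℂ} (hre : |s.re| ≤ |t.re|)
    (him : |s.im| ≤ |t.im|) : ‖s‖ ≤ ‖t‖ := by
  rw [Complex.norm_def, Complex.norm_def]
  apply Real.sqrt_le_sqrt
  simp only [Complex.normSq_apply, ← sq]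
  exact add_le_add (sq_le_sq.2 hre) (sq_le_sq.2 him)

lemma image_scaleReIm_closedBall_subset_iff {p q P Q r : ℝ} (hr : 0 < r) :
    scaleReIm p q '' closedBall 0 r ⊆ scaleReIm P Q '' closedBall 0 r ↔
      |p| ≤ |P| ∧ |q| ≤ |Q| := by
  constructor
  · intro h
    have vertex (t : ℂ) (ht : ‖t‖ = r) : ∃ s : ℂ, ‖s‖ ≤ r ∧ scaleReIm P Q s = scaleReIm p q t := by
      obtain ⟨s, hs, hst⟩ := h ⟨t, mem_closedBall_zero_iff.2 ht.le, rfl⟩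
      exact ⟨s, mem_closedBall_zero_iff.1 hs, hst⟩
    obtain ⟨s, hs, hsr⟩ := vertex r (by simp [hr.le])
    obtain ⟨s', hs', hsi⟩ := vertex (r * Complex.I) (by simp [hr.le])
    exact ⟨abs_le_abs_of_mul_eq_mul hr ((Complex.abs_re_le_norm s).trans hs)
        (by simpa [scaleReIm] using congrArg Complex.re hsr),
      abs_le_abs_of_mul_eq_mul hr ((Complex.abs_im_le_norm s').trans hs')
        (by simpa [scaleReIm] using congrArg Complex.im hsi)⟩
  · rintro ⟨hp, hq⟩ _ ⟨t, ht, rfl⟩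
    obtain ⟨u, hu, hPu⟩ := exists_mul_eq_mul_of_abs_le hp t.re
    obtain ⟨v, hv, hQv⟩ := exists_mul_eq_mul_of_abs_le hq t.im
    refine ⟨⟨u, v⟩, ?_, by simp [scaleReIm, hPu, hQv]⟩
    rw [mem_closedBall_zero_iff] at ht ⊢
    exact (norm_le_norm_of_abs_re_le_of_abs_im_le hu hv).trans ht

theorem stmt10 (a₁ a₂ b₁ b₂ : ℝ) (ha₁ : 0 ≤ a₁) (ha₂ : 0 ≤ a₂)
    (hb₁ : 0 ≤ b₁) (hb₂ : 0 ≤ b₂) :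
    numRange (cyc ![(b₁ : ℂ), (b₂ : ℂ)]) ⊆ numRange (cyc ![(a₁ : ℂ), (a₂ : ℂ)]) ↔
      |b₁ - b₂| ≤ |a₁ - a₂| ∧ b₁ + b₂ ≤ a₁ + a₂ := by
  rw [numRange_cyc_two_ofReal, numRange_cyc_two_ofReal,
    image_scaleReIm_closedBall_subset_iff (by norm_num),
    abs_of_nonneg (add_nonneg hb₁ hb₂), abs_of_nonneg (add_nonneg ha₁ ha₂), and_comm]
end

section
/- Let R = S(r₁, r₂, r₃, r₄) with r₁, r₂, r₃, r₄ > 0. Then for every θ ∈ ℝ and every z ∈ ℂ, det(zI − 2·Re(e^{iθ}R)) = z⁴ − (r₁² + r₂² + r₃² + r₄²)z² + r₁²r₃² + r₂²r₄² − 2r₁r₂r₃r₄·cos(4θ). -/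
open Matrix BigOperators

-- Only the identity, the four transpositions of cyclic neighbours, the two double transpositions
-- `(0 1)(2 3)`, `(0 3)(1 2)` and the two 4-cycles avoid the zero entries.
theorem det_fin_four_cyclic_tridiagonal {R : Type*} [CommRing R] (z u v a b c d : R) :
    !![z, -(u * a), 0, -(v * d);
       -(v * a), z, -(u * b), 0;
       0, -(v * b), z, -(u * c);
       -(u * d), 0, -(v * c), z].det =
      z ^ 4 - u * v * (a ^ 2 + b ^ 2 + c ^ 2 + d ^ 2) * z ^ 2
        + (u * v) ^ 2 * (a ^ 2 * c ^ 2 + b ^ 2 * d ^ 2) - a * b * c * d * (u ^ 4 + v ^ 4) := by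
  simp [det_succ_row_zero, Fin.sum_univ_succ, Fin.succAbove]
  ring

theorem cyc_fin_four (a b c d : ℂ) :
    cyc ![a, b, c, d] = !![0, a, 0, 0; 0, 0, b, 0; 0, 0, 0, c; d, 0, 0, 0] := by
  ext i j
  fin_cases i <;> fin_cases j <;> simp [cyc]

theorem sub_two_smul_reT_cyc_fin_four (θ : ℝ) (z : ℂ) (a b c d : ℝ) :
    z • (1 : Matrix (Fin 4) (Fin 4) ℂ) - (2 : ℂ) • reT θ (cyc ![(a : ℂ), b, c, d]) =
      let u := Complex.exp (θ * Complex.I)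
      let v := Complex.exp (-(θ * Complex.I))
      !![z, -(u * a), 0, -(v * d);
         -(v * a), z, -(u * b), 0;
         0, -(v * b), z, -(u * c);
         -(u * d), 0, -(v * c), z] := by
  rw [cyc_fin_four]
  ext i j
  fin_cases i <;> fin_cases j <;> simp [reT, one_apply]

theorem exp_pow_four_add_exp_neg_pow_four (θ : ℝ) :
    Complex.exp (θ * Complex.I) ^ 4 + Complex.exp (-(θ * Complex.I)) ^ 4
      = 2 * Real.cos (4 * θ) := by
  rw [← Complex.exp_nat_mul, ← Complex.exp_nat_mul, Complex.ofReal_cos, Complex.cos]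
  push_cast
  ring_nf

theorem stmt12_general (r₁ r₂ r₃ r₄ : ℝ)
    (θ : ℝ) (z : ℂ) :
    (z • (1 : Matrix (Fin 4) (Fin 4) ℂ)
        - (2 : ℂ) • reT θ (cyc ![(r₁ : ℂ), (r₂ : ℂ), (r₃ : ℂ), (r₄ : ℂ)])).det =
      z ^ 4 - ((r₁ : ℂ) ^ 2 + (r₂ : ℂ) ^ 2 + (r₃ : ℂ) ^ 2 + (r₄ : ℂ) ^ 2) * z ^ 2
        + (r₁ : ℂ) ^ 2 * (r₃ : ℂ) ^ 2 + (r₂ : ℂ) ^ 2 * (r₄ : ℂ) ^ 2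
        - 2 * (r₁ : ℂ) * (r₂ : ℂ) * (r₃ : ℂ) * (r₄ : ℂ) * Real.cos (4 * θ) := by
  rw [sub_two_smul_reT_cyc_fin_four, det_fin_four_cyclic_tridiagonal, ← Complex.exp_add,
    add_neg_cancel, Complex.exp_zero, exp_pow_four_add_exp_neg_pow_four]
  ring

theorem stmt12 (r₁ r₂ r₃ r₄ : ℝ) (h₁ : 0 < r₁) (h₂ : 0 < r₂) (h₃ : 0 < r₃) (h₄ : 0 < r₄)
    (θ : ℝ) (z : ℂ) :
    (z • (1 : Matrix (Fin 4) (Fin 4) ℂ)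
        - (2 : ℂ) • reT θ (cyc ![(r₁ : ℂ), (r₂ : ℂ), (r₃ : ℂ), (r₄ : ℂ)])).det =
      z ^ 4 - ((r₁ : ℂ) ^ 2 + (r₂ : ℂ) ^ 2 + (r₃ : ℂ) ^ 2 + (r₄ : ℂ) ^ 2) * z ^ 2
        + (r₁ : ℂ) ^ 2 * (r₃ : ℂ) ^ 2 + (r₂ : ℂ) ^ 2 * (r₄ : ℂ) ^ 2
        - 2 * (r₁ : ℂ) * (r₂ : ℂ) * (r₃ : ℂ) * (r₄ : ℂ) * Real.cos (4 * θ) :=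
  stmt12_general r₁ r₂ r₃ r₄ θ z
end

section
/- Let B = S(b₁, b₂, b₃, b₄, b₅) with b₁, …, b₅ real. Then for every θ ∈ ℝ and every x ∈ ℂ, det(xI − (e^{iθ}B + e^{-iθ}Bᵗ)) = x⁵ − β₂x³ + β₁x − β₀·cos(5θ), where β₂ = b₁² + b₂² + b₃² + b₄² + b₅², β₁ = b₁²b₃² + b₁²b₄² + b₂²b₄² + b₂²b₅² + b₃²b₅², and β₀ = 2b₁b₂b₃b₄b₅. -/
/-!
The matrix `x • 1 - (c • S(a) + d • S(a)ᵀ)` is periodic tridiagonal. In its Leibniz expansion only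
the permutations made of disjoint adjacent transpositions `(i i+1)` (indices mod 5) and the two
5-cycles survive, giving `x⁵ - cd·β₂ x³ + (cd)²·β₁ x - (c⁵ + d⁵)·a₁⋯a₅`. For `c = e^{iθ}`,
`d = e^{-iθ}` one has `cd = 1` and `c⁵ + d⁵ = 2 cos 5θ`.
-/

open Matrix BigOperators

theorem det_periodic_tridiagonal_five {R : Type*} [CommRing R] (u v : Fin 5 → R) (x : R) :
    !![x, -u 0, 0, 0, -v 4;
       -v 0, x, -u 1, 0, 0;
       0, -v 1, x, -u 2, 0;
       0, 0, -v 2, x, -u 3;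
       -u 4, 0, 0, -v 3, x].det =
      x ^ 5 - (u 0 * v 0 + u 1 * v 1 + u 2 * v 2 + u 3 * v 3 + u 4 * v 4) * x ^ 3
        + (u 0 * v 0 * u 2 * v 2 + u 0 * v 0 * u 3 * v 3 + u 1 * v 1 * u 3 * v 3
            + u 1 * v 1 * u 4 * v 4 + u 2 * v 2 * u 4 * v 4) * x
        - (u 0 * u 1 * u 2 * u 3 * u 4 + v 0 * v 1 * v 2 * v 3 * v 4) := by
  simp [det_succ_row_zero, Fin.sum_univ_succ]
  simp [Fin.succAbove, Fin.lt_def]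
  ring

theorem cyc_five (a : Fin 5 → ℂ) :
    cyc a = !![0, a 0, 0, 0, 0;
               0, 0, a 1, 0, 0;
               0, 0, 0, a 2, 0;
               0, 0, 0, 0, a 3;
               a 4, 0, 0, 0, 0] := by
  ext i j
  fin_cases i <;> fin_cases j <;> simp [cyc]

theorem smul_one_sub_smul_cyc_add_smul_transpose_five (a : Fin 5 → ℂ) (c d x : ℂ) :
    x • (1 : Matrix (Fin 5) (Fin 5) ℂ) - (c • cyc a + d • (cyc a)ᵀ) =
      !![x, -(c * a 0), 0, 0, -(d * a 4);
         -(d * a 0), x, -(c * a 1), 0, 0;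
         0, -(d * a 1), x, -(c * a 2), 0;
         0, 0, -(d * a 2), x, -(c * a 3);
         -(c * a 4), 0, 0, -(d * a 3), x] := by
  rw [cyc_five]
  ext i j
  fin_cases i <;> fin_cases j <;> simp

theorem det_smul_one_sub_smul_cyc_add_smul_transpose_five (a : Fin 5 → ℂ) (c d x : ℂ) :
    (x • (1 : Matrix (Fin 5) (Fin 5) ℂ) - (c • cyc a + d • (cyc a)ᵀ)).det =
      x ^ 5 - c * d * (a 0 ^ 2 + a 1 ^ 2 + a 2 ^ 2 + a 3 ^ 2 + a 4 ^ 2) * x ^ 3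
        + (c * d) ^ 2 * (a 0 ^ 2 * a 2 ^ 2 + a 0 ^ 2 * a 3 ^ 2 + a 1 ^ 2 * a 3 ^ 2
            + a 1 ^ 2 * a 4 ^ 2 + a 2 ^ 2 * a 4 ^ 2) * x
        - (c ^ 5 + d ^ 5) * (a 0 * a 1 * a 2 * a 3 * a 4) := by
  rw [smul_one_sub_smul_cyc_add_smul_transpose_five,
    det_periodic_tridiagonal_five (fun i ↦ c * a i) (fun i ↦ d * a i)]
  ring

theorem Complex.exp_mul_I_pow_add_exp_neg_mul_I_pow (θ : ℝ) (n : ℕ) :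
    exp (θ * I) ^ n + exp (-(θ * I)) ^ n = 2 * Real.cos (n * θ) := by
  rw [← exp_nat_mul, ← exp_nat_mul, ofReal_cos, cos]
  push_cast
  ring_nf

theorem stmt15 (b₁ b₂ b₃ b₄ b₅ : ℝ)
    (B : Matrix (Fin 5) (Fin 5) ℂ)
    (hB : B = cyc ![(b₁ : ℂ), (b₂ : ℂ), (b₃ : ℂ), (b₄ : ℂ), (b₅ : ℂ)])
    (θ : ℝ) (x : ℂ) :
    (x • (1 : Matrix (Fin 5) (Fin 5) ℂ)
        - (Complex.exp (θ * Complex.I) • B + Complex.exp (-(θ * Complex.I)) • Bᵀ)).det =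
      x ^ 5 - ((b₁ : ℂ) ^ 2 + (b₂ : ℂ) ^ 2 + (b₃ : ℂ) ^ 2 + (b₄ : ℂ) ^ 2 + (b₅ : ℂ) ^ 2) * x ^ 3
        + ((b₁ : ℂ) ^ 2 * (b₃ : ℂ) ^ 2 + (b₁ : ℂ) ^ 2 * (b₄ : ℂ) ^ 2 + (b₂ : ℂ) ^ 2 * (b₄ : ℂ) ^ 2
            + (b₂ : ℂ) ^ 2 * (b₅ : ℂ) ^ 2 + (b₃ : ℂ) ^ 2 * (b₅ : ℂ) ^ 2) * x
        - 2 * (b₁ : ℂ) * (b₂ : ℂ) * (b₃ : ℂ) * (b₄ : ℂ) * (b₅ : ℂ) * Real.cos (5 * θ) := by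
  subst hB
  have hcd : Complex.exp (θ * Complex.I) * Complex.exp (-(θ * Complex.I)) = 1 := by
    rw [← Complex.exp_add, add_neg_cancel, Complex.exp_zero]
  rw [det_smul_one_sub_smul_cyc_add_smul_transpose_five, hcd,
    Complex.exp_mul_I_pow_add_exp_neg_mul_I_pow]
  simp only [cons_val_zero, cons_val_one, cons_val, one_pow, one_mul, Nat.cast_ofNat,
    Complex.ofReal_cos, Complex.ofReal_mul, Complex.ofReal_ofNat]
  ring
end
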